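/- Let (E,Y_E,D) be a D-ertex algebra and let V = E ⊕ ℂ be the vertex algebra with products (u,a)_n (v,b) = (u_n v + b·c_n(u) + a·δ_{n,−1} v, a·b·δ_{n,−1}) and vacuum 1 = (0,1), and let i : E → V be the embedding i(u) = (u,0). Then for every vertex algebra (W,Y_W,1_W), regarded as a D-ertex algebra via its derivative operator 𝒟_W(v) = v_{−2} 1_W, and every D-ertex algebra homomorphism ψ : E → W, there exists a unique vertex algebra homomorphism φ : V → W such that φ(i(u)) = ψ(u) for all u ∈ E. -/

import Mathlib

/-!
A vertex algebra homomorphism `φ : E ⊕ ℂ → W` extending `ψ` must send `(u, a)` to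
`ψ u + a • 1_W`, which gives uniqueness. This map is multiplicative because in a vertex algebra
the Jacobi identity gives `𝒟(uₙ1) = -n·u_{n-1}1`, hence `𝒟ᵏ u = k!·u_{-1-k}1`; since `ψ`
intertwines `D` with `𝒟`, it sends `cₙ(u)` to `ψ(u)ₙ1_W`, the term by which the product on
`E ⊕ ℂ` differs from that of `E`.
-/

noncomputable section

/-- Generalized binomial coefficient `m(m-1)⋯(m-i+1)/i!` in `ℚ`, for `m : ℤ`, `i : ℕ`. -/
def qbinom (m : ℤ) (i : ℕ) : ℚ :=
  (∏ j ∈ Finset.range i, ((m : ℚ) - (j : ℚ))) / (Nat.factorial i : ℚ)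

/-- The data of bilinear products `uₙv` (for `n : ℤ`) on a `ℂ`-vector space `V` forms an
ertex algebra: bilinearity, truncation, and the Jacobi identity in Borcherds component form,
where the (finite by truncation) sums are formalized as `finsum`s. -/
structure IsErtex {V : Type} [AddCommGroup V] [Module ℂ V]
    (mul : ℤ → V → V → V) : Prop where
  add_left : ∀ (n : ℤ) (u u' v : V), mul n (u + u') v = mul n u v + mul n u' v
  smul_left : ∀ (n : ℤ) (c : ℂ) (u v : V), mul n (c • u) v = c • mul n u v
  add_right : ∀ (n : ℤ) (u v v' : V), mul n u (v + v') = mul n u v + mul n u v'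
  smul_right : ∀ (n : ℤ) (c : ℂ) (u v : V), mul n u (c • v) = c • mul n u v
  trunc : ∀ u v : V, ∃ N : ℤ, ∀ n : ℤ, N ≤ n → mul n u v = 0
  jacobi : ∀ (u v w : V) (p q r : ℤ),
    (∑ᶠ i : ℕ, (qbinom p i : ℂ) • mul (p + q - (i : ℤ)) (mul (r + (i : ℤ)) u v) w) =
    ∑ᶠ i : ℕ, ((-1 : ℂ) ^ (i : ℕ) * (qbinom r i : ℂ)) •
      (mul (p + r - (i : ℤ)) u (mul (q + (i : ℤ)) v w)
        - ((-1 : ℂ) ^ r) • mul (q + r - (i : ℤ)) v (mul (p + (i : ℤ)) u w))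

/-- A (bundled) ertex algebra. -/
structure ErtexAlgebra where
  carrier : Type
  [addCommGroup : AddCommGroup carrier]
  [module : Module ℂ carrier]
  mul : ℤ → carrier → carrier → carrier
  isErtex : IsErtex mul

attribute [instance] ErtexAlgebra.addCommGroup ErtexAlgebra.module

/-- An ertex algebra (given by its products) is injective if `uₙv = 0` for all `n, v`
implies `u = 0`. -/
def ErtexInjectiveFun {V : Type} [AddCommGroup V] [Module ℂ V]
    (mul : ℤ → V → V → V) : Prop :=
  ∀ u : V, (∀ (n : ℤ) (v : V), mul n u v = 0) → u = 0

/-- `f` intertwines the products `mulV` and `mulW` (ertex algebra homomorphism property). -/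
def IsMulHomFun {V W : Type} [AddCommGroup V] [Module ℂ V] [AddCommGroup W] [Module ℂ W]
    (mulV : ℤ → V → V → V) (mulW : ℤ → W → W → W) (f : V →ₗ[ℂ] W) : Prop :=
  ∀ (n : ℤ) (u v : V), f (mulV n u v) = mulW n (f u) (f v)

/-- Vacuum and creation properties for the vector `one`. -/
structure IsVacuum {V : Type} [AddCommGroup V] [Module ℂ V]
    (mul : ℤ → V → V → V) (one : V) : Prop where
  vac_minus_one : ∀ v : V, mul (-1) one v = v
  vac_ne : ∀ n : ℤ, n ≠ -1 → ∀ v : V, mul n one v = 0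
  create_minus_one : ∀ u : V, mul (-1) u one = u
  create_nonneg : ∀ n : ℤ, 0 ≤ n → ∀ u : V, mul n u one = 0

/-- A (bundled) vertex algebra: an ertex algebra with a vacuum vector. -/
structure VertexAlgebra extends ErtexAlgebra where
  vac : carrier
  isVacuum : IsVacuum mul vac

/-- The `D`-derivative property: `(Du)ₙ v = -n · u_{n-1} v`. -/
def IsDDeriv {V : Type} [AddCommGroup V] [Module ℂ V]
    (mul : ℤ → V → V → V) (D : V → V) : Prop :=
  ∀ (n : ℤ) (u v : V), mul n (D u) v = ((-n : ℤ) : ℂ) • mul (n - 1) u v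

/-- The `D`-bracket derivative formula: `D(uₙv) = (Du)ₙv + uₙ(Dv)`. -/
def IsDBracket {V : Type} [AddCommGroup V] [Module ℂ V]
    (mul : ℤ → V → V → V) (D : V → V) : Prop :=
  ∀ (n : ℤ) (u v : V), D (mul n u v) = mul n (D u) v + mul n u (D v)

/-- Skew-symmetry: `uₙv = ∑_{i≥0} (-1)^{n+1+i} (1/i!) Dⁱ(v_{n+i}u)` (sum finite by
truncation, formalized as a `finsum`). -/
def IsSkew {V : Type} [AddCommGroup V] [Module ℂ V]
    (mul : ℤ → V → V → V) (D : V → V) : Prop :=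
  ∀ (n : ℤ) (u v : V), mul n u v =
    ∑ᶠ i : ℕ, ((-1 : ℂ) ^ (n + 1 + (i : ℤ)) * ((Nat.factorial i : ℂ))⁻¹) •
      D^[i] (mul (n + (i : ℤ)) v u)

/-- The three defining properties of a `D`-ertex algebra structure. -/
def IsDStructure {V : Type} [AddCommGroup V] [Module ℂ V]
    (mul : ℤ → V → V → V) (D : V → V) : Prop :=
  IsDDeriv mul D ∧ IsDBracket mul D ∧ IsSkew mul D

/-- A (bundled) `D`-ertex algebra. -/
structure DErtexAlgebra extends ErtexAlgebra where
  D : carrier →ₗ[ℂ] carrier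
  isD : IsDStructure mul ⇑D

/-- `cₙ(u) = (1/(-n-1)!) D^{-n-1} u` for `n ≤ -1`, and `0` for `n ≥ 0`. -/
def DErtexAlgebra.cfun (E : DErtexAlgebra) (n : ℤ) (u : E.carrier) : E.carrier :=
  if n ≤ -1 then ((Nat.factorial (-n - 1).toNat : ℂ))⁻¹ • (⇑E.D)^[(-n - 1).toNat] u else 0

/-- The products on `E ⊕ ℂ`:
`(u,a)ₙ(v,b) = (uₙv + b·cₙ(u) + a·δ_{n,-1}·v, a·b·δ_{n,-1})`. -/
def DErtexAlgebra.extMul (E : DErtexAlgebra) :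
    ℤ → E.carrier × ℂ → E.carrier × ℂ → E.carrier × ℂ :=
  fun n p q =>
    (E.mul n p.1 q.1 + q.2 • E.cfun n p.1 + (if n = -1 then p.2 • q.1 else 0),
      if n = -1 then p.2 * q.2 else 0)

/-- The adjoined vacuum vector `1 = (0,1)` in `E ⊕ ℂ`. -/
def DErtexAlgebra.extVac (E : DErtexAlgebra) : E.carrier × ℂ := (0, 1)

/-- The linear span of `{Dⁿ(ψ u) : n ≥ 0, u ∈ E}` inside a `D`-ertex algebra. -/
def DSpan (E : ErtexAlgebra) (F : DErtexAlgebra) (ψ : E.carrier →ₗ[ℂ] F.carrier) :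
    Submodule ℂ F.carrier :=
  Submodule.span ℂ {x | ∃ (n : ℕ) (u : E.carrier), x = (⇑F.D)^[n] (ψ u)}

/-- `ψ : E → F` is a `D`-injective ertex algebra homomorphism into the `D`-ertex algebra
`F`: it is an ertex homomorphism and the span of `{Dⁿ(ψ u)}` is an injective ertex algebra. -/
def IsDInjectiveHom (E : ErtexAlgebra) (F : DErtexAlgebra)
    (ψ : E.carrier →ₗ[ℂ] F.carrier) : Prop :=
  IsMulHomFun E.mul F.mul ψ ∧
    ∀ w : F.carrier, w ∈ DSpan E F ψ →
      (∀ n : ℤ, ∀ v ∈ DSpan E F ψ, F.mul n w v = 0) → w = 0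

/-- The linear span of `{𝒟ⁿ(ψ u) : n ≥ 0, u ∈ E}` inside a vertex algebra, where
`𝒟(v) = v₋₂1` is the derivative operator. -/
def VDSpan (E : ErtexAlgebra) (W : VertexAlgebra) (ψ : E.carrier →ₗ[ℂ] W.carrier) :
    Submodule ℂ W.carrier :=
  Submodule.span ℂ {x | ∃ (n : ℕ) (u : E.carrier), x = (fun v => W.mul (-2) v W.vac)^[n] (ψ u)}

/-- `ψ : E → W` is a `D`-injective ertex algebra homomorphism into the vertex algebra `W`
regarded as a `D`-ertex algebra via `𝒟(v) = v₋₂1`. -/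
def IsVDInjectiveHom (E : ErtexAlgebra) (W : VertexAlgebra)
    (ψ : E.carrier →ₗ[ℂ] W.carrier) : Prop :=
  IsMulHomFun E.mul W.mul ψ ∧
    ∀ w : W.carrier, w ∈ VDSpan E W ψ →
      (∀ n : ℤ, ∀ v ∈ VDSpan E W ψ, W.mul n w v = 0) → w = 0


theorem qbinom_zero_right (m : ℤ) : qbinom m 0 = 1 := by simp [qbinom]

theorem qbinom_one_right (m : ℤ) : qbinom m 1 = m := by simp [qbinom]

theorem qbinom_zero_left {i : ℕ} (hi : i ≠ 0) : qbinom 0 i = 0 := by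
  rw [qbinom, Finset.prod_eq_zero (Finset.mem_range.mpr (Nat.pos_of_ne_zero hi)) (by simp),
    zero_div]

theorem IsErtex.mul_zero_right {V : Type} [AddCommGroup V] [Module ℂ V]
    {mul : ℤ → V → V → V} (h : IsErtex mul) (n : ℤ) (u : V) : mul n u 0 = 0 := by
  simpa using h.smul_right n 0 u 0

theorem IsVacuum.mul_vac_left {V : Type} [AddCommGroup V] [Module ℂ V]
    {mul : ℤ → V → V → V} {one : V} (h : IsVacuum mul one) (n : ℤ) (v : V) :
    mul n one v = if n = -1 then v else 0 := by
  split_ifs with hn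
  · exact hn ▸ h.vac_minus_one v
  · exact h.vac_ne n hn v

namespace VertexAlgebra

variable (W : VertexAlgebra)

def deriv (v : W.carrier) : W.carrier := W.mul (-2) v W.vac

theorem mul_vac_mul_vac_of_nonneg (m : ℤ) {k : ℤ} (hk : 0 ≤ k) (u : W.carrier) :
    W.mul m W.vac (W.mul k u W.vac) = 0 := by
  rw [W.isVacuum.mul_vac_left, W.isVacuum.create_nonneg k hk, ite_self]

/-- The Jacobi identity for `(u, 1, 1)` with `(p, q, r) = (0, -2, n)`. -/
theorem deriv_mul_vac (n : ℤ) (u : W.carrier) :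
    W.deriv (W.mul n u W.vac) = ((-n : ℤ) : ℂ) • W.mul (n - 1) u W.vac := by
  have hJ := W.isErtex.jacobi u W.vac W.vac 0 (-2) n
  rw [finsum_eq_single _ 0 (fun i hi => by rw [qbinom_zero_left hi]; simp),
    finsum_eq_single _ 1 (fun i hi => by
      rw [W.isVacuum.vac_ne (-2 + i) (by omega), W.isErtex.mul_zero_right,
        W.mul_vac_mul_vac_of_nonneg _ (by omega)]
      simp)] at hJ
  simp only [Nat.cast_zero, Nat.cast_one, zero_add, add_zero, sub_zero] at hJ
  rw [W.mul_vac_mul_vac_of_nonneg _ zero_le_one, show (-2 : ℤ) + 1 = -1 by norm_num,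
    W.isVacuum.vac_minus_one, qbinom_zero_right, qbinom_one_right, smul_zero, sub_zero,
    Rat.cast_one, one_smul] at hJ
  rw [deriv, hJ]
  congr 1
  push_cast
  ring

theorem iterate_deriv (k : ℕ) (u : W.carrier) :
    W.deriv^[k] u = (k.factorial : ℂ) • W.mul (-1 - k) u W.vac := by
  induction k with
  | zero => simp [W.isVacuum.create_minus_one]
  | succ k ih =>
    rw [Function.iterate_succ_apply', ih, deriv, W.isErtex.smul_left, ← deriv, deriv_mul_vac,
      smul_smul, Nat.factorial_succ]
    congr 1
    · push_cast
      ring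
    · congr 1
      push_cast
      ring

theorem mul_add_smul_vac (n : ℤ) (x y : W.carrier) (c d : ℂ) :
    W.mul n (x + c • W.vac) (y + d • W.vac) =
      W.mul n x y + d • W.mul n x W.vac + if n = -1 then c • y + (c * d) • W.vac else 0 := by
  simp only [W.isErtex.add_left, W.isErtex.add_right, W.isErtex.smul_left,
    W.isErtex.smul_right, W.isVacuum.mul_vac_left]
  split_ifs <;> simp [smul_smul]

end VertexAlgebra

namespace DErtexAlgebra

variable (E : DErtexAlgebra) {W : VertexAlgebra} (ψ : E.carrier →ₗ[ℂ] W.carrier)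

theorem map_cfun (hψD : Function.Semiconj ψ E.D W.deriv) (n : ℤ) (u : E.carrier) :
    ψ (E.cfun n u) = W.mul n (ψ u) W.vac := by
  rw [cfun]
  split_ifs with hn
  · rw [map_smul, (hψD.iterate_right _) u, W.iterate_deriv, smul_smul,
      inv_mul_cancel₀ (Nat.cast_ne_zero.mpr (Nat.factorial_ne_zero _)), one_smul]
    congr 1
    omega
  · rw [map_zero, W.isVacuum.create_nonneg n (by omega)]

def extLift : E.carrier × ℂ →ₗ[ℂ] W.carrier :=
  ψ.coprod (LinearMap.toSpanSingleton ℂ W.carrier W.vac)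

theorem extLift_apply (p : E.carrier × ℂ) : E.extLift ψ p = ψ p.1 + p.2 • W.vac := rfl

theorem isMulHomFun_extLift (hψ : IsMulHomFun E.mul W.mul ψ)
    (hψD : Function.Semiconj ψ E.D W.deriv) : IsMulHomFun E.extMul W.mul (E.extLift ψ) := by
  rintro n ⟨u, a⟩ ⟨v, b⟩
  simp only [extLift_apply, extMul, W.mul_add_smul_vac]
  split_ifs <;> simp only [map_add, map_smul, hψ n u v, E.map_cfun ψ hψD, zero_smul, add_zero]
  abel

theorem extLift_extVac : E.extLift ψ E.extVac = W.vac := by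
  simp [extLift_apply, extVac]

theorem extLift_unique {φ : E.carrier × ℂ →ₗ[ℂ] W.carrier} (hvac : φ E.extVac = W.vac)
    (hψ : ∀ u, φ (u, 0) = ψ u) : φ = E.extLift ψ :=
  LinearMap.prod_ext (LinearMap.ext fun u => by simpa [extLift_apply] using hψ u)
    (LinearMap.ext_ring (by simpa [extLift_apply, extVac] using hvac))

end DErtexAlgebra

/-- universal property of `V = E ⊕ ℂ` with embedding `i(u) = (u,0)`: any
`D`-ertex algebra homomorphism `ψ` from `E` into a vertex algebra `W` (regarded as a
`D`-ertex algebra via `𝒟_W(v) = v₋₂1_W`) factors through a unique vertex algebra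
homomorphism `φ : V → W` with `φ ∘ i = ψ`. -/
theorem stmt_12 (E : DErtexAlgebra) (W : VertexAlgebra)
    (ψ : E.carrier →ₗ[ℂ] W.carrier) (hψ : IsMulHomFun E.mul W.mul ψ)
    (hψD : ∀ v : E.carrier, ψ (E.D v) = W.mul (-2) (ψ v) W.vac) :
    ∃! φ : (E.carrier × ℂ) →ₗ[ℂ] W.carrier,
      (IsMulHomFun E.extMul W.mul φ ∧ φ E.extVac = W.vac) ∧
        ∀ u : E.carrier, φ (u, 0) = ψ u :=
  ⟨E.extLift ψ, ⟨⟨E.isMulHomFun_extLift ψ hψ hψD, E.extLift_extVac ψ⟩, fun u => by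
      simp [DErtexAlgebra.extLift_apply]⟩,
    fun _ ⟨⟨_, hvac⟩, hcomm⟩ => E.extLift_unique ψ hvac hcomm⟩

end
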